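/- arXiv:2602.15583 — 2 statements merged into one kernel-verified Lean document; each statement's English description precedes it below -/
import Mathlib

section
/- Let L be a frame and U ⊆ LC(L) a nonempty upper set. Define φ(V) = {(a,b) ∈ LC(L) | c(a) ∩ o(b) ⊆ V} for V ∈ S_b(L), and ψ(U) = ⋁_{(c,d)∈U} c(c) ∩ o(d). Then φ(ψ(U)) = U if and only if U is an admissible upper set of LC(L). -/
/-!
Represent `(a, b) ∈ LC(L)` by the sublocale `c(a) ∩ o(b)`, the fixed set of the nucleus
`x ↦ b ⇨ (a ⊔ x)`. Then `⊑` is reverse inclusion, binary joins in `LC(L)` are intersections,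
and the meet of a family is the least locally closed sublocale containing its members.

If `F` is admissible with meet `m`, testing distributivity against the closed sublocales `↑x`
shows that every `x ∈ c(m.1) ∩ o(m.2)` is the meet of the `b ⇨ (a ⊔ x)` over `(a, b) ∈ F`,
i.e. lies in `⋁ F`; so a fixed point of `φ ∘ ψ` is closed under admissible meets.
Conversely, if `S = c(a) ∩ o(b) ⊆ ψ(U)`, the family `{(a, b) ∨ q | q ∈ U}` lies in the upper
set `U` and is admissible with meet `(a, b)`: intersecting with a locally closed (hence
complemented) sublocale distributes over joins, so `S = ⋁_q (S ∩ S_q)`.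
-/


open Set

variable {L : Type*} [Order.Frame L]

/-- The open sublocale determined by `a`. -/
def Opn (a : L) : Set L := Set.range (a ⇨ ·)

/-- A sublocale: a subset closed under all meets and under `a ⇨ (-)`. -/
def IsSublocale (S : Set L) : Prop :=
  (∀ T ⊆ S, sInf T ∈ S) ∧ ∀ a : L, ∀ s ∈ S, a ⇨ s ∈ S

/-- Join of two sublocales in the coframe of sublocales. -/
def SJoin2 (S T : Set L) : Set L := {x | ∃ M ⊆ S ∪ T, sInf M = x}

/-- The supplement (co-pseudocomplement) of a sublocale: the least sublocale `T`
with `S ∨ T = L`. -/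
def Supp (S : Set L) : Set L := ⋂₀ {T | IsSublocale T ∧ SJoin2 S T = Set.univ}

/-- The frame surjection onto a sublocale. -/
def nu (T : Set L) (a : L) : L := sInf {t ∈ T | a ≤ t}

/-- Canonical representations of locally closed sublocales. -/
def LCset (L : Type*) [Order.Frame L] : Set (L × L) :=
  {p | p.1 ≤ p.2 ∧ p.2 ⇨ p.1 = p.1}

/-- The canonical-representation map `lc`. -/
def lc (p : L × L) : L × L := (p.2 ⇨ p.1, (p.2 ⇨ p.1) ⊔ p.2)

/-- The order on `LCset L`: `(x,y) ⊑ (a,b)` iff `x ≤ a` and `b ≤ a ∨ y`. -/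
def LCle (p q : L × L) : Prop := p.1 ≤ q.1 ∧ q.2 ≤ q.1 ⊔ p.2

/-- The join in `LCset L`. -/
def lcSup (p q : L × L) : L × L := lc (p.1 ⊔ q.1, p.2 ⊓ q.2)

/-- The join in the coframe of sublocales of a family of locally closed sublocales. -/
def SJoinP (U : Set (L × L)) : Set L :=
  {x | ∃ M ⊆ ⋃ p ∈ U, Set.Ici p.1 ∩ Opn p.2, sInf M = x}

/-- `m` is the greatest lower bound of `F` in the poset `(LCset L, LCle)`. -/
def lcIsGLB (F : Set (L × L)) (m : L × L) : Prop :=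
  m ∈ LCset L ∧ (∀ p ∈ F, LCle m p) ∧
    ∀ q ∈ LCset L, (∀ p ∈ F, LCle q p) → LCle q m

/-- `F` is an admissible family in the join-semilattice `LCset L`, with meet `m`:
the meet exists and distributes over binary joins. -/
def lcAdmissible (F : Set (L × L)) (m : L × L) : Prop :=
  lcIsGLB F m ∧ ∀ b ∈ LCset L, lcIsGLB ((fun p => lcSup b p) '' F) (lcSup b m)

def lcSublocale (p : L × L) : Set L := Ici p.1 ∩ Opn p.2

def lcNucleus (p : L × L) : Nucleus L where
  toFun x := p.2 ⇨ (p.1 ⊔ x)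
  map_inf' x y := by simp only [sup_inf_left, himp_inf_distrib]
  idempotent' x := by
    rw [sup_eq_right.2 (le_himp_iff.2 (inf_le_left.trans le_sup_left)), himp_idem]
  le_apply' _ := le_himp_iff.2 (inf_le_left.trans le_sup_right)

lemma lcNucleus_apply (p : L × L) (x : L) : lcNucleus p x = p.2 ⇨ (p.1 ⊔ x) := rfl

lemma mem_Opn_iff {b x : L} : x ∈ Opn b ↔ b ⇨ x = x :=
  ⟨by rintro ⟨z, rfl⟩; exact himp_idem, fun h => ⟨x, h⟩⟩

lemma Opn_top : Opn (⊤ : L) = univ :=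
  eq_univ_of_forall fun _ => mem_Opn_iff.2 top_himp

lemma Opn_inf (a b : L) : Opn (a ⊓ b) = Opn a ∩ Opn b := by
  ext x
  simp only [mem_inter_iff, mem_Opn_iff]
  constructor
  · intro h
    exact ⟨le_antisymm ((himp_le_himp_right inf_le_left).trans h.le) le_himp,
      le_antisymm ((himp_le_himp_right inf_le_right).trans h.le) le_himp⟩
  · rintro ⟨ha, hb⟩
    rw [← himp_himp, hb, ha]

lemma mem_lcSublocale {p : L × L} {x : L} : x ∈ lcSublocale p ↔ p.1 ≤ x ∧ p.2 ⇨ x = x := by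
  rw [lcSublocale, mem_inter_iff, mem_Ici, mem_Opn_iff]

lemma range_lcNucleus (p : L × L) : range (lcNucleus p) = lcSublocale p := by
  ext x
  rw [Nucleus.mem_range, mem_lcSublocale, lcNucleus_apply]
  constructor
  · intro h
    have hx : p.1 ≤ x := h ▸ le_himp_iff.2 (inf_le_left.trans le_sup_left)
    rw [sup_eq_right.2 hx] at h
    exact ⟨hx, h⟩
  · rintro ⟨hx, h⟩
    rw [sup_eq_right.2 hx, h]

lemma mem_lcSublocale_iff_lcNucleus {p : L × L} {x : L} :
    x ∈ lcSublocale p ↔ lcNucleus p x = x := by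
  rw [← range_lcNucleus, Nucleus.mem_range]

lemma lcNucleus_mem_lcSublocale (p : L × L) (x : L) : lcNucleus p x ∈ lcSublocale p :=
  range_lcNucleus p ▸ mem_range_self x

lemma lcNucleus_le_of_mem {p : L × L} {x t : L} (hxt : x ≤ t) (ht : t ∈ lcSublocale p) :
    lcNucleus p x ≤ t :=
  ((lcNucleus p).monotone hxt).trans (mem_lcSublocale_iff_lcNucleus.1 ht).le

lemma lcNucleus_le_of_lcSublocale_subset {p q : L × L} (h : lcSublocale p ⊆ lcSublocale q) :
    lcNucleus q ≤ lcNucleus p := by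
  rwa [← range_lcNucleus, ← range_lcNucleus, Nucleus.range_subset_range] at h

lemma lcSublocale_top (a : L) : lcSublocale (a, ⊤) = Ici a := by
  rw [lcSublocale, Opn_top, inter_univ]

lemma lcSublocale_sup_inf (p q : L × L) :
    lcSublocale (p.1 ⊔ q.1, p.2 ⊓ q.2) = lcSublocale p ∩ lcSublocale q := by
  rw [lcSublocale, lcSublocale, lcSublocale, ← Ici_inter_Ici, Opn_inf, inter_inter_inter_comm]

lemma lcSublocale_lc (p : L × L) : lcSublocale (lc p) = lcSublocale p := by
  ext x
  rw [mem_lcSublocale, mem_lcSublocale, lc]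
  dsimp only
  constructor
  · rintro ⟨h1, h2⟩
    rw [sup_himp_distrib, himp_eq_top_iff.2 h1, top_inf_eq] at h2
    exact ⟨le_himp.trans h1, h2⟩
  · rintro ⟨h1, h2⟩
    have h3 : p.2 ⇨ p.1 ≤ x := h2 ▸ himp_le_himp_left h1
    rw [sup_himp_distrib, himp_eq_top_iff.2 h3, top_inf_eq]
    exact ⟨h3, h2⟩

lemma lcSublocale_lcSup (p q : L × L) :
    lcSublocale (lcSup p q) = lcSublocale p ∩ lcSublocale q :=
  (lcSublocale_lc _).trans (lcSublocale_sup_inf p q)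

lemma lc_mem_LCset (p : L × L) : lc p ∈ LCset L := by
  refine ⟨le_sup_left, ?_⟩
  change ((p.2 ⇨ p.1) ⊔ p.2) ⇨ (p.2 ⇨ p.1) = p.2 ⇨ p.1
  rw [sup_himp_distrib, himp_self, top_inf_eq, himp_idem]

lemma lcSup_mem_LCset (p q : L × L) : lcSup p q ∈ LCset L := lc_mem_LCset _

lemma LCle.lcSublocale_subset {p q : L × L} (h : LCle p q) :
    lcSublocale q ⊆ lcSublocale p := by
  intro x hx
  rw [mem_lcSublocale] at hx ⊢
  obtain ⟨hqx, hx⟩ := hx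
  refine ⟨h.1.trans hqx, le_antisymm ?_ le_himp⟩
  calc p.2 ⇨ x ≤ q.2 ⇨ x := le_himp_iff.2 <| calc
        (p.2 ⇨ x) ⊓ q.2 ≤ (p.2 ⇨ x) ⊓ (q.1 ⊔ p.2) := inf_le_inf_left _ h.2
        _ = ((p.2 ⇨ x) ⊓ q.1) ⊔ ((p.2 ⇨ x) ⊓ p.2) := inf_sup_left _ _ _
        _ ≤ x := sup_le (inf_le_right.trans hqx) himp_inf_le
    _ = x := hx

lemma LCle_iff_lcSublocale_subset {p q : L × L} (hq : q ∈ LCset L) :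
    LCle p q ↔ lcSublocale q ⊆ lcSublocale p := by
  refine ⟨LCle.lcSublocale_subset, fun h => ⟨?_, ?_⟩⟩
  · exact (mem_lcSublocale.1 (h (mem_lcSublocale.2 ⟨le_rfl, hq.2⟩))).1
  · -- `lcNucleus q p.2` lies in `o(p.2)` and above `p.2`, so it is `⊤`
    have hy := (mem_lcSublocale.1 (h (lcNucleus_mem_lcSublocale q p.2))).2
    rw [himp_eq_top_iff.2 ((lcNucleus q).le_apply)] at hy
    exact himp_eq_top_iff.1 hy.symm

lemma lcIsGLB_iff {F : Set (L × L)} {m : L × L} (hF : F ⊆ LCset L) :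
    lcIsGLB F m ↔ m ∈ LCset L ∧ (∀ p ∈ F, lcSublocale p ⊆ lcSublocale m) ∧
      ∀ q ∈ LCset L, (∀ p ∈ F, lcSublocale p ⊆ lcSublocale q) →
        lcSublocale m ⊆ lcSublocale q := by
  refine and_congr_right fun hm => ?_
  refine and_congr (forall₂_congr fun p hp => LCle_iff_lcSublocale_subset (hF hp))
    (forall₂_congr fun q _ => ?_)
  rw [LCle_iff_lcSublocale_subset hm]
  exact imp_congr_left (forall₂_congr fun p hp => LCle_iff_lcSublocale_subset (hF hp))

lemma lcSublocale_subset_SJoinP {U : Set (L × L)} {p : L × L} (hp : p ∈ U) :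
    lcSublocale p ⊆ SJoinP U :=
  fun x hx => ⟨{x}, singleton_subset_iff.2 (mem_biUnion hp hx), sInf_singleton⟩

lemma SJoinP_mono {U V : Set (L × L)} (h : U ⊆ V) : SJoinP U ⊆ SJoinP V :=
  fun _ ⟨M, hM, hMx⟩ => ⟨M, hM.trans (biUnion_mono h fun _ _ => subset_rfl), hMx⟩

lemma mem_SJoinP_iff {U : Set (L × L)} {x : L} :
    x ∈ SJoinP U ↔ ⨅ q ∈ U, lcNucleus q x ≤ x := by
  constructor
  · rintro ⟨M, hM, rfl⟩
    refine le_sInf fun t ht => ?_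
    obtain ⟨q, hq, htq⟩ := mem_iUnion₂.1 (hM ht)
    exact (iInf₂_le q hq).trans (lcNucleus_le_of_mem (sInf_le ht) htq)
  · intro h
    refine ⟨(fun q => lcNucleus q x) '' U, ?_, ?_⟩
    · rintro _ ⟨q, hq, rfl⟩
      exact mem_biUnion hq (lcNucleus_mem_lcSublocale q x)
    · rw [sInf_image]
      exact le_antisymm h (le_iInf₂ fun q _ => (lcNucleus q).le_apply)

lemma lcSublocale_inter_SJoinP_subset {U : Set (L × L)} {p t : L × L}
    (h : ∀ q ∈ U, lcSublocale p ∩ lcSublocale q ⊆ lcSublocale t) :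
    lcSublocale p ∩ SJoinP U ⊆ lcSublocale t := by
  rintro x ⟨hxp, hxU⟩
  obtain ⟨hpx, hxo⟩ := mem_lcSublocale.1 hxp
  rw [mem_lcSublocale_iff_lcNucleus]
  refine le_antisymm ?_ (lcNucleus t).le_apply
  have hq : ∀ q ∈ U, lcNucleus t x ⊓ p.2 ≤ lcNucleus q x := fun q hq => by
    have hle : lcNucleus t x ≤ (p.2 ⊓ q.2) ⇨ ((p.1 ⊔ q.1) ⊔ x) :=
      lcNucleus_le_of_lcSublocale_subset ((lcSublocale_sup_inf p q).trans_subset (h q hq)) x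
    rw [sup_assoc, sup_eq_right.2 (hpx.trans le_sup_right), ← himp_himp] at hle
    exact le_himp_iff.1 hle
  calc lcNucleus t x ≤ p.2 ⇨ x :=
        le_himp_iff.2 ((le_iInf₂ hq).trans (mem_SJoinP_iff.1 hxU))
    _ = x := hxo

lemma lcSublocale_subset_SJoinP_of_lcAdmissible {F : Set (L × L)} {m : L × L}
    (hm : lcAdmissible F m) : lcSublocale m ⊆ SJoinP F := by
  intro x hx
  rw [mem_SJoinP_iff]
  set y := ⨅ p ∈ F, lcNucleus p x
  have hsup : (lcSup (x, ⊤) ·) '' F ⊆ LCset L := by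
    rintro _ ⟨p, -, rfl⟩
    exact lcSup_mem_LCset _ _
  have hglb := ((lcIsGLB_iff hsup).1 (hm.2 (x, ⊤) ⟨le_top, top_himp⟩)).2.2
    (y, ⊤) ⟨le_top, top_himp⟩
  simp only [forall_mem_image, lcSublocale_lcSup, lcSublocale_top] at hglb
  refine hglb (fun p hp z ⟨hxz, hz⟩ => ?_) ⟨mem_Ici.2 le_rfl, hx⟩
  exact (iInf₂_le p hp).trans (lcNucleus_le_of_mem hxz hz)

lemma lcIsGLB_image_of_lcSublocale_eq_inter {U : Set (L × L)} {m : L × L}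
    (f : L × L → L × L) (hm : m ∈ LCset L) (hmU : lcSublocale m ⊆ SJoinP U)
    (hf : ∀ q, f q ∈ LCset L ∧ lcSublocale (f q) = lcSublocale m ∩ lcSublocale q) :
    lcIsGLB (f '' U) m := by
  rw [lcIsGLB_iff (image_subset_iff.2 fun q _ => (hf q).1)]
  simp only [forall_mem_image, (hf _).2]
  refine ⟨hm, fun q _ => inter_subset_left, fun t _ ht => ?_⟩
  rw [← inter_eq_left.2 hmU]
  exact lcSublocale_inter_SJoinP_subset ht

lemma lcAdmissible_image_lcSup {U : Set (L × L)} {p : L × L} (hp : p ∈ LCset L)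
    (hpU : lcSublocale p ⊆ SJoinP U) : lcAdmissible ((lcSup p ·) '' U) p := by
  refine ⟨lcIsGLB_image_of_lcSublocale_eq_inter _ hp hpU
    fun q => ⟨lcSup_mem_LCset p q, lcSublocale_lcSup p q⟩, fun e _ => ?_⟩
  rw [image_image]
  refine lcIsGLB_image_of_lcSublocale_eq_inter _ (lcSup_mem_LCset e p) ?_
    fun q => ⟨lcSup_mem_LCset _ _, ?_⟩
  · rw [lcSublocale_lcSup]
    exact inter_subset_right.trans hpU
  · rw [lcSublocale_lcSup, lcSublocale_lcSup, lcSublocale_lcSup, inter_assoc]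

theorem stmt_14_general (U : Set (L × L)) (hU1 : U ⊆ LCset L)
    (hU3 : ∀ p ∈ U, ∀ q ∈ LCset L, LCle p q → q ∈ U) :
    {p | p ∈ LCset L ∧ Set.Ici p.1 ∩ Opn p.2 ⊆ SJoinP U} = U ↔
      ∀ F ⊆ U, ∀ m, lcAdmissible F m → m ∈ U := by
  constructor
  · intro h F hFU m hm
    rw [← h]
    exact ⟨hm.1.1, (lcSublocale_subset_SJoinP_of_lcAdmissible hm).trans (SJoinP_mono hFU)⟩
  · intro hclosed
    refine Subset.antisymm ?_ fun p hp => ⟨hU1 hp, lcSublocale_subset_SJoinP hp⟩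
    rintro p ⟨hp, hpU⟩
    refine hclosed _ ?_ p (lcAdmissible_image_lcSup hp hpU)
    rintro _ ⟨q, hq, rfl⟩
    refine hU3 q hq _ (lcSup_mem_LCset p q) ?_
    rw [LCle_iff_lcSublocale_subset (lcSup_mem_LCset p q), lcSublocale_lcSup]
    exact inter_subset_right

theorem stmt_14 (U : Set (L × L)) (hU1 : U ⊆ LCset L) (hU2 : U.Nonempty)
    (hU3 : ∀ p ∈ U, ∀ q ∈ LCset L, LCle p q → q ∈ U) :
    {p | p ∈ LCset L ∧ Set.Ici p.1 ∩ Opn p.2 ⊆ SJoinP U} = U ↔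
      ∀ F ⊆ U, ∀ m, lcAdmissible F m → m ∈ U :=
  stmt_14_general U hU1 hU3
end

section
/- Let L be a frame and S = ⋁_{i∈I} c(a_i) ∩ o(b_i) a smooth sublocale. Then ν_{S^#}(⋀S) = ⋀_{x∈L} ( (⋀_{i∈I} (b_i → (x ∨ a_i))) → (x ∨ ⋀_{j∈I} (b_j → a_j)) ). -/
open Set

variable {L : Type*} [Order.Frame L]

lemma mem_opn_iff {b u : L} : u ∈ Opn b ↔ b ⇨ u = u := by
  constructor
  · rintro ⟨z, rfl⟩
    simp [himp_himp]
  · intro h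
    exact ⟨u, h⟩

lemma sInf_iUnion' {ι : Sort*} (s : ι → Set L) : sInf (⋃ i, s i) = ⨅ i, sInf (s i) := by
  apply le_antisymm
  · exact le_iInf fun i => sInf_le_sInf (subset_iUnion s i)
  · refine le_sInf fun x hx => ?_
    obtain ⟨i, hi⟩ := mem_iUnion.mp hx
    exact (iInf_le _ i).trans (sInf_le hi)

lemma himp_sInf' (a : L) (s : Set L) : a ⇨ sInf s = sInf ((a ⇨ ·) '' s) := by
  apply le_antisymm
  · refine le_sInf ?_
    rintro _ ⟨x, hx, rfl⟩
    exact himp_le_himp_left (sInf_le hx)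
  · rw [le_himp_iff, le_sInf_iff]
    intro x hx
    calc sInf ((a ⇨ ·) '' s) ⊓ a ≤ (a ⇨ x) ⊓ a := inf_le_inf_right a (sInf_le ⟨x, hx, rfl⟩)
    _ ≤ x := by rw [inf_comm]; exact inf_himp_le

lemma le_nu (T : Set L) (x : L) : x ≤ nu T x := le_sInf fun t ht => ht.2

lemma nu_mem {T : Set L} (hT : IsSublocale T) (x : L) : nu T x ∈ T :=
  hT.1 _ (sep_subset _ _)

/-- key: nu of a "join set" -/
lemma nu_joinSet (U : Set L) (c : L) :
    nu {x | ∃ M ⊆ U, sInf M = x} c = sInf {u | u ∈ U ∧ c ≤ u} := by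
  apply le_antisymm
  · refine sInf_le_sInf ?_
    rintro u ⟨hu, hcu⟩
    exact ⟨⟨{u}, singleton_subset_iff.mpr hu, sInf_singleton⟩, hcu⟩
  · refine le_sInf ?_
    rintro t ⟨⟨M, hMU, rfl⟩, hct⟩
    refine sInf_le_sInf fun m hm => ⟨hMU hm, hct.trans (sInf_le hm)⟩

lemma sInf_locClosed (a b c : L) :
    sInf {u | u ∈ Ici a ∩ Opn b ∧ c ≤ u} = b ⇨ (c ⊔ a) := by
  apply le_antisymm
  · refine sInf_le ⟨⟨?_, ⟨c ⊔ a, rfl⟩⟩, ?_⟩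
    · exact le_sup_right.trans le_himp
    · exact le_sup_left.trans le_himp
  · refine le_sInf ?_
    rintro u ⟨⟨hau, hub⟩, hcu⟩
    rw [mem_opn_iff] at hub
    rw [← hub, le_himp_iff, inf_comm, inf_himp]
    exact inf_le_right.trans (sup_le hcu hau)

lemma sublocale_of_himpClosed (U : Set L)
    (hU : ∀ u ∈ U, ∀ a : L, a ⇨ u ∈ U) :
    IsSublocale {x | ∃ M ⊆ U, sInf M = x} := by
  constructor
  · intro T' hT'
    choose f hf1 hf2 using fun t : T' => hT' t.2
    refine ⟨⋃ t, f t, iUnion_subset hf1, ?_⟩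
    rw [sInf_iUnion']
    simp only [hf2]
    rw [← sInf_eq_iInf']
  · rintro a _ ⟨M, hMU, rfl⟩
    refine ⟨(a ⇨ ·) '' M, ?_, (himp_sInf' a M).symm⟩
    rintro _ ⟨m, hm, rfl⟩
    exact hU m (hMU hm) a

lemma locClosed_himpClosed (x y : L) : ∀ u ∈ Ici x ∩ Opn y, ∀ a : L, a ⇨ u ∈ Ici x ∩ Opn y := by
  rintro u ⟨hxu, hu⟩ a
  refine ⟨hxu.trans le_himp, ?_⟩
  rw [mem_opn_iff] at hu ⊢
  rw [himp_himp, inf_comm, ← himp_himp, hu]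

/-- The supplement of a sublocale `T` equals the join of `c(y) ∩ o(ν_T y)`. -/
lemma supp_eq {T : Set L} (hT : IsSublocale T) :
    Supp T = {x | ∃ M ⊆ ⋃ y : L, Ici y ∩ Opn (nu T y), sInf M = x} := by
  set U : Set L := ⋃ y : L, Ici y ∩ Opn (nu T y) with hU
  have hUclosed : ∀ u ∈ U, ∀ a : L, a ⇨ u ∈ U := by
    rintro u hu a
    rw [hU, mem_iUnion] at hu ⊢
    obtain ⟨y, hy⟩ := hu
    exact ⟨y, locClosed_himpClosed y (nu T y) u hy a⟩
  apply le_antisymm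
  · -- Supp T ⊆ candidate: candidate is in the defining set
    refine sInter_subset_of_mem ⟨sublocale_of_himpClosed U hUclosed, ?_⟩
    ext z
    simp only [SJoin2, mem_setOf_eq, mem_univ, iff_true]
    refine ⟨{nu T z, nu T z ⇨ z}, ?_, ?_⟩
    · rintro w hw
      rcases hw with rfl | rfl
      · exact Or.inl (nu_mem hT z)
      · refine Or.inr ⟨{nu T z ⇨ z}, ?_, sInf_singleton⟩
        refine singleton_subset_iff.mpr (mem_iUnion.mpr ⟨z, le_himp, z, rfl⟩)
    · rw [sInf_pair, inf_himp, inf_eq_right.mpr (le_nu T z)]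
  · -- candidate ⊆ every member
    rintro x ⟨M, hMU, rfl⟩
    rintro T' ⟨hT'sub, hT'join⟩
    refine hT'sub.1 M fun m hm => ?_
    have hmU := hMU hm
    rw [hU, mem_iUnion] at hmU
    obtain ⟨y, hym, hmo⟩ := hmU
    -- m = sInf M' with M' ⊆ T ∪ T'
    have : m ∈ SJoin2 T T' := by rw [hT'join]; trivial
    obtain ⟨M', hM', hM'inf⟩ := this
    have hsplit : M' = (M' ∩ T) ∪ (M' ∩ T') := by
      rw [← inter_union_distrib_left]; exact (inter_eq_left.mpr hM').symm
    have hs' : sInf (M' ∩ T) ∈ T := hT.1 _ inter_subset_right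
    have hnle : nu T y ≤ sInf (M' ∩ T) := by
      refine sInf_le ⟨hs', ?_⟩
      calc y ≤ m := hym
      _ = sInf (M' ∩ T) ⊓ sInf (M' ∩ T') := by rw [← sInf_union, ← hsplit, hM'inf]
      _ ≤ sInf (M' ∩ T) := inf_le_left
    rw [mem_opn_iff] at hmo
    have : m = nu T y ⇨ sInf (M' ∩ T') := by
      rw [← hmo]
      conv_lhs => rw [← hM'inf, hsplit, sInf_union, himp_inf_distrib]
      rw [himp_eq_top_iff.mpr hnle, top_inf_eq]
    rw [this]
    exact hT'sub.2 _ _ (hT'sub.1 _ inter_subset_right)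

lemma sep_iUnion' {κ : Sort*} (s : κ → Set L) (c : L) :
    {u | u ∈ ⋃ i, s i ∧ c ≤ u} = ⋃ i, {u | u ∈ s i ∧ c ≤ u} := by
  ext u; simp only [mem_iUnion, mem_setOf_eq]; tauto

lemma nu_join_iUnion {κ : Sort*} (s : κ → Set L) (c : L) :
    nu {x | ∃ M ⊆ ⋃ i, s i, sInf M = x} c = ⨅ i, sInf {u | u ∈ s i ∧ c ≤ u} := by
  rw [nu_joinSet, sep_iUnion', sInf_iUnion']

theorem stmt_17 {ι : Type*} (a b : ι → L) (T : Set L)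
    (hT : T = SJoinP (Set.range fun i => (a i, b i))) :
    nu (Supp T) (sInf T) =
      ⨅ x : L, (⨅ i, b i ⇨ (x ⊔ a i)) ⇨ (x ⊔ ⨅ j, b j ⇨ a j) := by
  have hTeq : T = {x | ∃ M ⊆ ⋃ i, Ici (a i) ∩ Opn (b i), sInf M = x} := by
    rw [hT]; unfold SJoinP; rw [biUnion_range]
  have hnu : ∀ c : L, nu T c = ⨅ i, b i ⇨ (c ⊔ a i) := by
    intro c
    rw [hTeq, nu_join_iUnion]
    exact iInf_congr fun i => sInf_locClosed (a i) (b i) c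
  have hTsub : IsSublocale T := by
    rw [hTeq]
    refine sublocale_of_himpClosed _ ?_
    rintro u hu a'
    rw [mem_iUnion] at hu ⊢
    obtain ⟨i, hi⟩ := hu
    exact ⟨i, locClosed_himpClosed _ _ u hi a'⟩
  have hsInf : sInf T = ⨅ j, b j ⇨ a j := by
    have h0 : sInf T = nu T ⊥ := by
      unfold nu; congr 1; ext t; simp
    rw [h0, hnu]; simp
  rw [supp_eq hTsub, nu_join_iUnion (fun y => Ici y ∩ Opn (nu T y))]
  refine iInf_congr fun y => ?_
  rw [sInf_locClosed, hnu, hsInf, sup_comm (⨅ j, b j ⇨ a j) y]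
end
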